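/- W-like sufficiency: let Uᵢ, Ũᵢ (i = 0,1,2) be unitaries on ℂ² and |φᵢ⟩ unit vectors with ⟨φᵢ|(ŨᵢUᵢ)†(UᵢŨᵢ)|φᵢ⟩ = 0 for all i. Then the normalized vector proportional to (ŨU)₀⊗(UŨ)₁⊗(UŨ)₂ + (UŨ)₀⊗(ŨU)₁⊗(UŨ)₂ + (UŨ)₀⊗(UŨ)₁⊗(ŨU)₂ applied to |φ₀φ₁φ₂⟩ is local-unitarily equivalent to the W state (|100⟩+|010⟩+|001⟩)/√3, i.e. equals (W₀⊗W₁⊗W₂)|W⟩ for some single-qubit unitaries Wᵢ. -/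

import Mathlib

open Matrix Complex

noncomputable section

abbrev Q3 := Fin 2 × Fin 2 × Fin 2

def inner2 (u v : Fin 2 → ℂ) : ℂ := ∑ i, star (u i) * v i

def tens3 (a b c : Fin 2 → ℂ) : Q3 → ℂ := fun p => a p.1 * b p.2.1 * c p.2.2

def kron3 (A B C : Matrix (Fin 2) (Fin 2) ℂ) : Matrix Q3 Q3 ℂ :=
  Matrix.of fun p q => A p.1 q.1 * B p.2.1 q.2.1 * C p.2.2 q.2.2

/-- The three-qubit W state `(|100⟩+|010⟩+|001⟩)/√3`. -/
def w3 : Q3 → ℂ := fun p =>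
  ((Real.sqrt 3 : ℝ) : ℂ)⁻¹ *
    ((if p = (1, 0, 0) then 1 else 0) + (if p = (0, 1, 0) then 1 else 0) +
      (if p = (0, 0, 1) then 1 else 0))

/-!
Put `aᵢ = UᵢŨᵢ|φᵢ⟩` and `bᵢ = ŨᵢUᵢ|φᵢ⟩`. Both are unit vectors, and by hypothesis they are
orthogonal, so the matrix `Wᵢ` with columns `aᵢ, bᵢ` is unitary and sends `|0⟩ ↦ aᵢ`,
`|1⟩ ↦ bᵢ`. The switch output is `(b₀a₁a₂ + a₀b₁a₂ + a₀a₁b₂)/√3`, which is exactly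
`(W₀ ⊗ W₁ ⊗ W₂)|W⟩`.
-/

lemma inner2_eq_star_dotProduct (u v : Fin 2 → ℂ) : inner2 u v = star u ⬝ᵥ v := rfl

lemma inner2_comm (u v : Fin 2 → ℂ) : inner2 u v = star (inner2 v u) := by
  rw [inner2_eq_star_dotProduct, inner2_eq_star_dotProduct, star_dotProduct]

lemma inner2_mulVec_mulVec_of_mem_unitaryGroup {M : Matrix (Fin 2) (Fin 2) ℂ}
    (hM : M ∈ unitaryGroup (Fin 2) ℂ) (u v : Fin 2 → ℂ) :
    inner2 (M *ᵥ u) (M *ᵥ v) = inner2 u v := by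
  rw [inner2_eq_star_dotProduct, inner2_eq_star_dotProduct, star_mulVec, ← dotProduct_mulVec,
    mulVec_mulVec, ← star_eq_conjTranspose, mem_unitaryGroup_iff'.mp hM, one_mulVec]

lemma mem_unitaryGroup_of_orthonormal_cols {a b : Fin 2 → ℂ} (ha : inner2 a a = 1)
    (hb : inner2 b b = 1) (hab : inner2 a b = 0) :
    (Matrix.of ![a, b])ᵀ ∈ unitaryGroup (Fin 2) ℂ := by
  have hba : inner2 b a = 0 := by rw [inner2_comm, hab, star_zero]
  rw [mem_unitaryGroup_iff']
  ext i j
  have hentry : (star (Matrix.of ![a, b])ᵀ * (Matrix.of ![a, b])ᵀ) i j =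
      inner2 (![a, b] i) (![a, b] j) := by
    simp only [mul_apply, star_apply, transpose_apply, of_apply, inner2]
  rw [hentry]
  fin_cases i <;> fin_cases j <;> simp [ha, hb, hab, hba]

lemma kron3_mulVec_tens3 (A B C : Matrix (Fin 2) (Fin 2) ℂ) (u v w : Fin 2 → ℂ) :
    kron3 A B C *ᵥ tens3 u v w = tens3 (A *ᵥ u) (B *ᵥ v) (C *ᵥ w) := by
  funext p
  simp only [kron3, tens3, mulVec, dotProduct, of_apply, Fintype.sum_prod_type,
    Fin.sum_univ_two]
  ring

lemma w3_eq_sum_tens3 : w3 = ((Real.sqrt 3 : ℝ) : ℂ)⁻¹ •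
    (tens3 (Pi.single 1 1) (Pi.single 0 1) (Pi.single 0 1) +
      tens3 (Pi.single 0 1) (Pi.single 1 1) (Pi.single 0 1) +
      tens3 (Pi.single 0 1) (Pi.single 0 1) (Pi.single 1 1)) := by
  funext ⟨x, y, z⟩
  fin_cases x <;> fin_cases y <;> fin_cases z <;> simp [w3, tens3]

lemma kron3_mulVec_w3 (A B C : Matrix (Fin 2) (Fin 2) ℂ) :
    kron3 A B C *ᵥ w3 = ((Real.sqrt 3 : ℝ) : ℂ)⁻¹ •
      (tens3 (A.col 1) (B.col 0) (C.col 0) + tens3 (A.col 0) (B.col 1) (C.col 0) +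
        tens3 (A.col 0) (B.col 0) (C.col 1)) := by
  simp only [w3_eq_sum_tens3, mulVec_smul, mulVec_add, kron3_mulVec_tens3, mulVec_single_one]

/-- under the orthogonality conditions, the normalized W-type switch output
`∝ ((ŨU)₀⊗(UŨ)₁⊗(UŨ)₂ + (UŨ)₀⊗(ŨU)₁⊗(UŨ)₂ + (UŨ)₀⊗(UŨ)₁⊗(ŨU)₂)|φ₀φ₁φ₂⟩` is
local-unitarily equivalent to the W state. -/
theorem w_switch_output_LU_equivalent_W
    (U Ut : Fin 3 → Matrix (Fin 2) (Fin 2) ℂ)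
    (hU : ∀ i, U i ∈ Matrix.unitaryGroup (Fin 2) ℂ)
    (hUt : ∀ i, Ut i ∈ Matrix.unitaryGroup (Fin 2) ℂ)
    (φ : Fin 3 → (Fin 2 → ℂ)) (hφ : ∀ i, inner2 (φ i) (φ i) = 1)
    (horth : ∀ i, inner2 ((Ut i * U i).mulVec (φ i)) ((U i * Ut i).mulVec (φ i)) = 0) :
    ∃ W : Fin 3 → Matrix (Fin 2) (Fin 2) ℂ,
      (∀ i, W i ∈ Matrix.unitaryGroup (Fin 2) ℂ) ∧
      ((Real.sqrt 3 : ℝ) : ℂ)⁻¹ •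
        ((kron3 (Ut 0 * U 0) (U 1 * Ut 1) (U 2 * Ut 2) +
          kron3 (U 0 * Ut 0) (Ut 1 * U 1) (U 2 * Ut 2) +
          kron3 (U 0 * Ut 0) (U 1 * Ut 1) (Ut 2 * U 2)).mulVec
            (tens3 (φ 0) (φ 1) (φ 2))) =
        (kron3 (W 0) (W 1) (W 2)).mulVec w3 := by
  set a : Fin 3 → Fin 2 → ℂ := fun i => (U i * Ut i) *ᵥ φ i
  set b : Fin 3 → Fin 2 → ℂ := fun i => (Ut i * U i) *ᵥ φ i
  have ha : ∀ i, inner2 (a i) (a i) = 1 := fun i =>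
    (inner2_mulVec_mulVec_of_mem_unitaryGroup (mul_mem (hU i) (hUt i)) _ _).trans (hφ i)
  have hb : ∀ i, inner2 (b i) (b i) = 1 := fun i =>
    (inner2_mulVec_mulVec_of_mem_unitaryGroup (mul_mem (hUt i) (hU i)) _ _).trans (hφ i)
  have hab : ∀ i, inner2 (a i) (b i) = 0 := fun i => by rw [inner2_comm, horth i, star_zero]
  refine ⟨fun i => (Matrix.of ![a i, b i])ᵀ,
    fun i => mem_unitaryGroup_of_orthonormal_cols (ha i) (hb i) (hab i), ?_⟩
  rw [kron3_mulVec_w3]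
  simp only [add_mulVec, kron3_mulVec_tens3]
  rfl
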